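/- A mapping h : Σ^{++} → Γ^{++} is a two-dimensional morphism if and only if there exists a uniform substitution g : Σ → Γ^{++} such that h = g_{⊖,⦶} = g_{⦶,⊖}. -/

import Mathlib

/-- A nonempty rectangular two-dimensional word (array) over `σ`. -/
structure Arr (σ : Type) : Type where
  rows : ℕ
  cols : ℕ
  rows_pos : 0 < rows
  cols_pos : 0 < cols
  entry : Fin rows → Fin cols → σ

namespace Arr

variable {σ γ : Type}

/-- Column concatenation: place `V` to the right of `U`; `none` if heights differ. -/
def colCat (U V : Arr σ) : Option (Arr σ) :=
  if h : U.rows = V.rows then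
    some { rows := U.rows
           cols := U.cols + V.cols
           rows_pos := U.rows_pos
           cols_pos := by have := U.cols_pos; omega
           entry := fun i j =>
             if hj : (j : ℕ) < U.cols then U.entry i ⟨j, hj⟩
             else V.entry (Fin.cast h i) ⟨(j : ℕ) - U.cols, by have := j.isLt; omega⟩ }
  else none

/-- Row concatenation: place `V` below `U`; `none` if widths differ. -/
def rowCat (U V : Arr σ) : Option (Arr σ) :=
  if h : U.cols = V.cols then
    some { rows := U.rows + V.rows
           cols := U.cols
           rows_pos := by have := U.rows_pos; omega
           cols_pos := U.cols_pos
           entry := fun i j =>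
             if hi : (i : ℕ) < U.rows then U.entry ⟨i, hi⟩ j
             else V.entry ⟨(i : ℕ) - U.rows, by have := i.isLt; omega⟩ (Fin.cast h j) }
  else none

/-- A two-dimensional morphism: compatible with both concatenations,
with "both sides undefined" counting as equal. -/
def IsMorphism (h : Arr σ → Arr γ) : Prop :=
  (∀ V W : Arr σ, Option.map h (colCat V W) = colCat (h V) (h W)) ∧
  (∀ V W : Arr σ, Option.map h (rowCat V W) = rowCat (h V) (h W))

/-- Concatenate a nonempty list of (possibly undefined) arrays with the
given partial concatenation operation; `none` on the empty list. -/
def catListO (op : Arr σ → Arr σ → Option (Arr σ)) : List (Option (Arr σ)) → Option (Arr σ)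
  | [] => none
  | [a] => a
  | a :: b :: rest => a.bind fun x => (catListO op (b :: rest)).bind fun y => op x y

/-- `g_{⦶,⊖}`: substitute and assemble, first column-concatenating each row,
then row-concatenating the rows. -/
def subCR {X : Type} (g : X → Arr σ) (α : Arr X) : Option (Arr σ) :=
  catListO rowCat (List.ofFn fun i : Fin α.rows =>
    catListO colCat (List.ofFn fun j : Fin α.cols => some (g (α.entry i j))))

/-- `g_{⊖,⦶}`: substitute and assemble, first row-concatenating each column,
then column-concatenating the columns. -/
def subRC {X : Type} (g : X → Arr σ) (α : Arr X) : Option (Arr σ) :=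
  catListO colCat (List.ofFn fun j : Fin α.cols =>
    catListO rowCat (List.ofFn fun i : Fin α.rows => some (g (α.entry i j))))

/-- A substitution is uniform if all images have the same dimensions. -/
def Uniform {X : Type} (g : X → Arr σ) : Prop :=
  ∃ m n : ℕ, ∀ x : X, (g x).rows = m ∧ (g x).cols = n

end Arr

open Arr

/-- The five modes of array pattern languages. -/
inductive Mode | h | p | r | c | rc
deriving DecidableEq

/-- The array pattern language of an array pattern (an array over the
variables `ℕ`) in each mode. -/
def langOf (σ : Type) : Mode → Arr ℕ → Set (Arr σ)
  | Mode.h, α => {W | ∃ g : Arr ℕ → Arr σ, IsMorphism g ∧ g α = W}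
  | Mode.p, α => {W | ∃ s : ℕ → Arr σ, subCR s α = some W ∧ subRC s α = some W}
  | Mode.r, α => {W | ∃ s : ℕ → Arr σ, subCR s α = some W}
  | Mode.c, α => {W | ∃ s : ℕ → Arr σ, subRC s α = some W}
  | Mode.rc, α =>
      {W | ∃ s : ℕ → Arr σ, subCR s α = some W} ∪ {W | ∃ s : ℕ → Arr σ, subRC s α = some W}

/-! A morphism `h` is determined by its values on `1 × 1` arrays: every array is the assembly of
its cells in either order, so `h = (h ∘ cell)_{⊖,⦶} = (h ∘ cell)_{⦶,⊖}`, and since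
`cell x ⦶ cell y` and `cell x ⊖ cell y` are defined, all `h (cell x)` have the same size.
Conversely, for an `(m, n)`-uniform `g` the assembly `g_{⦶,⊖} U` is the blow-up whose entry
`(i, j)` is entry `(i mod m, j mod n)` of `g (U (i / m) (j / n))`, and this blow-up visibly
commutes with both concatenations. -/

namespace Arr

variable {σ γ : Type}

theorem ext_of_entry {U V : Arr σ} (hr : U.rows = V.rows) (hc : U.cols = V.cols)
    (he : ∀ i j (hi : i < U.rows) (hj : j < U.cols) (hi' : i < V.rows) (hj' : j < V.cols),
      U.entry ⟨i, hi⟩ ⟨j, hj⟩ = V.entry ⟨i, hi'⟩ ⟨j, hj'⟩) : U = V := by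
  obtain ⟨r, c, _, _, e⟩ := U
  obtain ⟨r', c', _, _, e'⟩ := V
  dsimp only at hr hc
  subst hr hc
  congr
  funext i j
  exact he i j i.isLt j.isLt i.isLt j.isLt

theorem colCat_isSome_iff {U V : Arr σ} : (colCat U V).isSome ↔ U.rows = V.rows := by
  unfold colCat
  split <;> simp [*]

theorem rowCat_isSome_iff {U V : Arr σ} : (rowCat U V).isSome ↔ U.cols = V.cols := by
  unfold rowCat
  split <;> simp [*]

def cell (x : σ) : Arr σ := ⟨1, 1, one_pos, one_pos, fun _ _ => x⟩

def row (U : Arr σ) (i : Fin U.rows) : Arr σ :=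
  ⟨1, U.cols, one_pos, U.cols_pos, fun _ j => U.entry i j⟩

def col (U : Arr σ) (j : Fin U.cols) : Arr σ :=
  ⟨U.rows, 1, U.rows_pos, one_pos, fun i _ => U.entry i j⟩

def transpose (U : Arr σ) : Arr σ :=
  ⟨U.cols, U.rows, U.cols_pos, U.rows_pos, fun i j => U.entry j i⟩

theorem transpose_transpose (U : Arr σ) : U.transpose.transpose = U := rfl

theorem transpose_injective : Function.Injective (transpose : Arr σ → Arr σ) :=
  fun U V h => by rw [← transpose_transpose U, h, transpose_transpose]

theorem map_transpose_rowCat (V W : Arr σ) :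
    Option.map transpose (rowCat V W) = colCat V.transpose W.transpose := by
  unfold rowCat colCat
  split <;> split <;> first | rfl | (exfalso; simp_all [transpose])

theorem map_catListO {opσ : Arr σ → Arr σ → Option (Arr σ)}
    {opγ : Arr γ → Arr γ → Option (Arr γ)} (f : Arr σ → Arr γ)
    (hf : ∀ V W, Option.map f (opσ V W) = opγ (f V) (f W)) :
    ∀ l : List (Option (Arr σ)),
      Option.map f (catListO opσ l) = catListO opγ (l.map (Option.map f))
  | [] => rfl
  | [_] => rfl
  | a :: b :: rest => by
    have ih := map_catListO f hf (b :: rest)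
    simp only [List.map_cons] at ih ⊢
    rw [catListO, catListO, ← ih]
    cases a <;> cases catListO opσ (b :: rest) <;> simp [hf]

theorem catListO_cons_ofFn (op : Arr σ → Arr σ → Option (Arr σ)) (a : Option (Arr σ))
    {k : ℕ} (f : Fin (k + 1) → Option (Arr σ)) :
    catListO op (a :: List.ofFn f) = a.bind fun x => (catListO op (List.ofFn f)).bind (op x) := by
  rw [List.ofFn_succ]
  rfl

theorem catListO_rowCat_ofFn_row (U : Arr σ) :
    catListO rowCat (List.ofFn fun i => some (U.row i)) = some U := by
  obtain ⟨r, c, hr, hc, e⟩ := U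
  induction r with
  | zero => exact absurd hr (lt_irrefl 0)
  | succ k ih =>
    rcases k with _ | k
    · refine congrArg some (ext_of_entry rfl rfl fun i j hi hj _ _ => ?_)
      obtain rfl : i = 0 := Nat.lt_one_iff.mp hi
      rfl
    · have hrest : catListO rowCat (List.ofFn fun i : Fin (k + 1) =>
          some (row ⟨k + 2, c, hr, hc, e⟩ i.succ)) =
            some ⟨k + 1, c, k.succ_pos, hc, fun i j => e i.succ j⟩ :=
        ih k.succ_pos _
      rw [List.ofFn_succ, catListO_cons_ofFn, hrest]
      simp only [Option.bind_some, rowCat, row, ↓reduceDIte]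
      refine congrArg some (ext_of_entry (by dsimp only; omega) rfl fun i j hi hj _ _ => ?_)
      dsimp only [row]
      split_ifs with hi
      · congr
        ext
        simp only [Fin.val_zero]
        omega
      · congr
        ext
        simp only [Fin.val_succ]
        omega

theorem catListO_colCat_ofFn_col (U : Arr σ) :
    catListO colCat (List.ofFn fun j => some (U.col j)) = some U := by
  have h := congrArg (Option.map transpose) (catListO_rowCat_ofFn_row U.transpose)
  rw [map_catListO transpose map_transpose_rowCat, List.map_ofFn] at h
  exact h

theorem subCR_cell (U : Arr σ) : subCR cell U = some U := by
  have hrow : ∀ i,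
      catListO colCat (List.ofFn fun j => some (cell (U.entry i j))) = some (U.row i) :=
    fun i => catListO_colCat_ofFn_col (U.row i)
  simp only [subCR, hrow]
  exact catListO_rowCat_ofFn_row U

theorem subRC_cell (U : Arr σ) : subRC cell U = some U := by
  have hcol : ∀ j,
      catListO rowCat (List.ofFn fun i => some (cell (U.entry i j))) = some (U.col j) :=
    fun j => catListO_rowCat_ofFn_row (U.col j)
  simp only [subRC, hcol]
  exact catListO_colCat_ofFn_col U

section BlowUp

variable {m n : ℕ} (g : σ → Arr γ) (hg : ∀ x, (g x).rows = m ∧ (g x).cols = n)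

include hg in
theorem uniform_rows_pos (x : σ) : 0 < m := (hg x).1 ▸ (g x).rows_pos

include hg in
theorem uniform_cols_pos (x : σ) : 0 < n := (hg x).2 ▸ (g x).cols_pos

def blockEntry (x : σ) (a : Fin m) (b : Fin n) : γ :=
  (g x).entry (Fin.cast (hg x).1.symm a) (Fin.cast (hg x).2.symm b)

def blowUp (U : Arr σ) : Arr γ where
  rows := U.rows * m
  cols := U.cols * n
  rows_pos := Nat.mul_pos U.rows_pos
    (uniform_rows_pos g hg (U.entry ⟨0, U.rows_pos⟩ ⟨0, U.cols_pos⟩))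
  cols_pos := Nat.mul_pos U.cols_pos
    (uniform_cols_pos g hg (U.entry ⟨0, U.rows_pos⟩ ⟨0, U.cols_pos⟩))
  entry i j := blockEntry g hg (U.entry i.divNat j.divNat) i.modNat j.modNat

theorem blowUp_rows (U : Arr σ) : (blowUp g hg U).rows = U.rows * m := rfl

theorem blowUp_cols (U : Arr σ) : (blowUp g hg U).cols = U.cols * n := rfl

theorem blowUp_entry_mk (U : Arr σ) (i j : ℕ) (hi : i < (blowUp g hg U).rows)
    (hj : j < (blowUp g hg U).cols) :
    (blowUp g hg U).entry ⟨i, hi⟩ ⟨j, hj⟩ =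
      blockEntry g hg
        (U.entry ⟨i / m, Nat.div_lt_of_lt_mul (Nat.mul_comm U.rows m ▸ hi)⟩
          ⟨j / n, Nat.div_lt_of_lt_mul (Nat.mul_comm U.cols n ▸ hj)⟩)
        ⟨i % m, Nat.mod_lt _ (Nat.pos_of_mul_pos_left (Nat.zero_lt_of_lt hi))⟩
        ⟨j % n, Nat.mod_lt _ (Nat.pos_of_mul_pos_left (Nat.zero_lt_of_lt hj))⟩ :=
  rfl

theorem blowUp_cell (x : σ) : blowUp g hg (cell x) = g x := by
  refine ext_of_entry (by simp [blowUp, cell, hg]) (by simp [blowUp, cell, hg])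
    fun i j hi hj _ _ => ?_
  rw [blowUp_entry_mk]
  simp only [blockEntry, cell]
  congr 1 <;> apply Fin.ext
  · exact Nat.mod_eq_of_lt (by simpa [cell, blowUp_rows] using hi)
  · exact Nat.mod_eq_of_lt (by simpa [cell, blowUp_cols] using hj)

theorem transpose_blowUp (U : Arr σ) :
    (blowUp g hg U).transpose =
      blowUp (transpose ∘ g) (fun x => ⟨(hg x).2, (hg x).1⟩) U.transpose :=
  rfl

theorem map_blowUp_colCat (V W : Arr σ) :
    Option.map (blowUp g hg) (colCat V W) = colCat (blowUp g hg V) (blowUp g hg W) := by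
  unfold colCat
  by_cases hr : V.rows = W.rows
  · rw [dif_pos hr, dif_pos (by rw [blowUp_rows, blowUp_rows, hr])]
    refine congrArg some (ext_of_entry rfl (Nat.add_mul _ _ _) fun i j hi hj _ _ => ?_)
    have hn := uniform_cols_pos g hg (V.entry ⟨0, V.rows_pos⟩ ⟨0, V.cols_pos⟩)
    have hdiv : (j : ℕ) / n < V.cols ↔ (j : ℕ) < V.cols * n := Nat.div_lt_iff_lt_mul hn
    rw [blowUp_entry_mk]
    dsimp only
    split_ifs with hV hV' hV'
    · rw [blowUp_entry_mk]
    · exact absurd (hdiv.1 hV) hV'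
    · exact absurd (hdiv.2 hV') hV
    · simp only [Fin.cast_mk]
      rw [blowUp_entry_mk]
      have hjn : n * V.cols ≤ j := by rw [Nat.mul_comm]; exact not_lt.1 hV'
      have hquot : (j - V.cols * n) / n = j / n - V.cols := by
        rw [Nat.mul_comm, Nat.sub_mul_div]
      have hrem : (j - V.cols * n) % n = j % n := by
        rw [Nat.mul_comm, Nat.sub_mul_mod hjn]
      simp only [blowUp_cols, hquot, hrem]
  · have hm := uniform_rows_pos g hg (V.entry ⟨0, V.rows_pos⟩ ⟨0, V.cols_pos⟩)
    rw [dif_neg hr, dif_neg (show (blowUp g hg V).rows ≠ (blowUp g hg W).rows from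
      fun h => hr (Nat.eq_of_mul_eq_mul_right hm h))]
    rfl

theorem map_blowUp_rowCat (V W : Arr σ) :
    Option.map (blowUp g hg) (rowCat V W) = rowCat (blowUp g hg V) (blowUp g hg W) := by
  apply Option.map_injective transpose_injective
  let hg' : ∀ x, (transpose (g x)).rows = n ∧ (transpose (g x)).cols = m :=
    fun x => ⟨(hg x).2, (hg x).1⟩
  calc Option.map transpose (Option.map (blowUp g hg) (rowCat V W))
      = Option.map (blowUp (transpose ∘ g) hg') (Option.map transpose (rowCat V W)) := by
        rw [Option.map_map, Option.map_map,
          show transpose ∘ blowUp g hg = blowUp (transpose ∘ g) hg' ∘ transpose from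
            funext (transpose_blowUp g hg)]
    _ = colCat (blowUp g hg V).transpose (blowUp g hg W).transpose := by
        rw [map_transpose_rowCat, map_blowUp_colCat, transpose_blowUp, transpose_blowUp]
    _ = Option.map transpose (rowCat (blowUp g hg V) (blowUp g hg W)) :=
        (map_transpose_rowCat _ _).symm

theorem isMorphism_blowUp : IsMorphism (blowUp g hg) :=
  ⟨map_blowUp_colCat g hg, map_blowUp_rowCat g hg⟩

end BlowUp

theorem IsMorphism.subCR_comp {f : Arr σ → Arr γ} (hf : IsMorphism f) {X : Type}
    (g : X → Arr σ) (U : Arr X) : subCR (f ∘ g) U = Option.map f (subCR g U) := by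
  simp only [subCR, map_catListO f hf.2, List.map_ofFn, Function.comp_def, map_catListO f hf.1,
    Option.map_some]

theorem IsMorphism.subRC_comp {f : Arr σ → Arr γ} (hf : IsMorphism f) {X : Type}
    (g : X → Arr σ) (U : Arr X) : subRC (f ∘ g) U = Option.map f (subRC g U) := by
  simp only [subRC, map_catListO f hf.1, List.map_ofFn, Function.comp_def, map_catListO f hf.2,
    Option.map_some]

theorem subCR_eq_some_blowUp {m n : ℕ} (g : σ → Arr γ)
    (hg : ∀ x, (g x).rows = m ∧ (g x).cols = n) (U : Arr σ) :
    subCR g U = some (blowUp g hg U) :=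
  calc subCR g U = subCR (blowUp g hg ∘ cell) U := by
        rw [show blowUp g hg ∘ cell = g from funext (blowUp_cell g hg)]
    _ = some (blowUp g hg U) := by rw [(isMorphism_blowUp g hg).subCR_comp, subCR_cell]; rfl

theorem uniform_of_forall_rows_cols_eq {X : Type} {g : X → Arr σ}
    (h : ∀ x y, (g x).rows = (g y).rows ∧ (g x).cols = (g y).cols) : Uniform g := by
  rcases isEmpty_or_nonempty X with hX | ⟨⟨x₀⟩⟩
  · exact ⟨0, 0, isEmptyElim⟩
  · exact ⟨_, _, fun x => h x x₀⟩

theorem IsMorphism.uniform_comp_cell {f : Arr σ → Arr γ} (hf : IsMorphism f) :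
    Uniform (f ∘ cell) :=
  uniform_of_forall_rows_cols_eq fun x y =>
    ⟨colCat_isSome_iff.1 (by
        rw [Function.comp_apply, Function.comp_apply, ← hf.1, Option.isSome_map,
          colCat_isSome_iff]
        rfl),
      rowCat_isSome_iff.1 (by
        rw [Function.comp_apply, Function.comp_apply, ← hf.2, Option.isSome_map,
          rowCat_isSome_iff]
        rfl)⟩

end Arr

open Arr

theorem stmt1_general {σ γ : Type} (h : Arr σ → Arr γ) :
    IsMorphism h ↔
      ∃ g : σ → Arr γ, Uniform g ∧
        (∀ U : Arr σ, subRC g U = some (h U)) ∧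
        (∀ U : Arr σ, subCR g U = some (h U)) := by
  constructor
  · intro hh
    refine ⟨h ∘ cell, hh.uniform_comp_cell, fun U => ?_, fun U => ?_⟩
    · rw [hh.subRC_comp, subRC_cell, Option.map_some]
    · rw [hh.subCR_comp, subCR_cell, Option.map_some]
  · rintro ⟨g, ⟨m, n, hg⟩, -, hCR⟩
    have h_eq : h = blowUp g hg :=
      funext fun U => Option.some.inj ((hCR U).symm.trans (subCR_eq_some_blowUp g hg U))
    exact h_eq ▸ isMorphism_blowUp g hg

/-- `h` is a two-dimensional morphism iff `h = g_{⊖,⦶} = g_{⦶,⊖}`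
for some uniform substitution `g`. -/
theorem stmt1 {σ γ : Type} [Fintype σ] [Fintype γ] (h : Arr σ → Arr γ) :
    IsMorphism h ↔
      ∃ g : σ → Arr γ, Uniform g ∧
        (∀ U : Arr σ, subRC g U = some (h U)) ∧
        (∀ U : Arr σ, subCR g U = some (h U)) :=
  stmt1_general h
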